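/- arXiv:1009.2347 — 3 statements merged into one kernel-verified Lean document; each statement's English description precedes it below -/
import Mathlib

section
/- Assume the flow setup below and let t* = min(1/(2‖D^{(1)}V‖_{∞,M}), t₀) (with 1/0 := ∞). Then for all t ∈ (0, t*], all x ∈ K₂, and all i ∈ {1,…,n}, the limit D_iY^x(t) := lim_{u→0} (Y^{x+u e_i}(t) − Y^x(t))/u exists in ℝⁿ, and ‖D_iY^x(t)‖ ≤ 2. -/
open MeasureTheory Filter Topology Set

/-- The partial derivative of `g : ℝⁿ → ℝ` in the `i`-th coordinate direction. -/
noncomputable def pderiv' {n : ℕ} (i : Fin n) (g : (Fin n → ℝ) → ℝ) : (Fin n → ℝ) → ℝ :=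
  fun x => fderiv ℝ g x (Pi.single i 1)

/-- The iterated partial derivative `D^β g` associated with a multi-index `β : Fin n → ℕ`. -/
noncomputable def mderiv' {n : ℕ} (β : Fin n → ℕ) (g : (Fin n → ℝ) → ℝ) : (Fin n → ℝ) → ℝ :=
  (List.finRange n).foldr (fun i h => (pderiv' i)^[β i] h) g

/-- `‖D^{(j)}V‖_{∞,U} = Σ_{|β|=j} Σ_{k=1}^{n} sup_{x∈U} |D^β V_k(x)|`. -/
noncomputable def DjNorm {n : ℕ} (j : ℕ) (V : (Fin n → ℝ) → Fin n → ℝ)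
    (U : Set (Fin n → ℝ)) : ℝ :=
  ∑ β ∈ Finset.univ.filter (fun β : Fin n → Fin (j + 1) => ∑ i, (β i : ℕ) = j),
    ∑ k : Fin n,
      sSup ((fun x => |mderiv' (fun i => (β i : ℕ)) (fun z => V z k) x|) '' U)

/-- `t* = min(1/(2‖D^{(1)}V‖_{∞,M}), t₀)`, with the convention `1/0 = ∞`. -/
noncomputable def tstar {n : ℕ} (V : (Fin n → ℝ) → Fin n → ℝ) (M : Set (Fin n → ℝ))
    (t₀ : ℝ) : ℝ :=
  if DjNorm 1 V M = 0 then t₀ else min (1 / (2 * DjNorm 1 V M)) t₀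

/-! The difference quotient `z_u(s) = u⁻¹ (Y^{x+u eᵢ}(s) - Y^x(s))` solves
`z_u(s) = eᵢ + ∫₀ˢ u⁻¹ (V(Y^{x+u eᵢ}) - V(Y^x))`. With `L = ‖D^{(1)}V‖_{∞,M}` the integrand is
at most `L ‖z_u‖`, and since `L t ≤ 1/2` a bootstrap on `φ = sup_{[0,t]} ‖z_u‖`
(`φ ≤ 1 + L t φ`) gives `‖z_u‖ ≤ 2`. Linearising `V` along `Y^x` with a second-order Taylor
remainder and bootstrapping the same way on `z_u - z_v` gives
`‖z_u(t) - z_v(t)‖ = O(|u| + |v|)`, so `z_u(t)` is Cauchy as `u → 0`. -/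

section
variable {E F : Type*} [NormedAddCommGroup E] [NormedSpace ℝ E] [NormedAddCommGroup F]
  [NormedSpace ℝ F]

lemma Convex.norm_image_sub_sub_fderiv_le {M : Set E} (hM : Convex ℝ M) {f : E → F}
    (hf : ∀ y ∈ M, DifferentiableAt ℝ f y) {C : ℝ} (hC₀ : 0 ≤ C)
    (hC : ∀ y ∈ M, ∀ z ∈ M, ‖fderiv ℝ f z - fderiv ℝ f y‖ ≤ C * ‖z - y‖) {a b : E} (ha : a ∈ M)
    (hb : b ∈ M) :
    ‖f b - f a - fderiv ℝ f a (b - a)‖ ≤ C * ‖b - a‖ ^ 2 := by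
  have hseg : segment ℝ a b ⊆ M := hM.segment_subset ha hb
  have hdiff : ∀ z ∈ segment ℝ a b, DifferentiableAt ℝ (fun z => f z - fderiv ℝ f a z) z :=
    fun z hz => (hf z (hseg hz)).sub (fderiv ℝ f a).differentiableAt
  have hbound : ∀ z ∈ segment ℝ a b,
      ‖fderiv ℝ (fun z => f z - fderiv ℝ f a z) z‖ ≤ C * ‖b - a‖ := fun z hz => by
    rw [fderiv_fun_sub (hf z (hseg hz)) (fderiv ℝ f a).differentiableAt, (fderiv ℝ f a).fderiv]
    exact (hC a ha z (hseg hz)).trans (by gcongr; exact norm_sub_le_of_mem_segment hz)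
  have := (convex_segment a b).norm_image_sub_le_of_norm_fderiv_le hdiff hbound
    (left_mem_segment ℝ a b) (right_mem_segment ℝ a b)
  rw [map_sub, sq, ← mul_assoc]
  convert this using 2
  abel

lemma norm_le_two_mul_of_eq_add_integral {t L B : ℝ} (ht : 0 ≤ t) (hL : 0 ≤ L)
    (hLt : L * t ≤ 1 / 2) {c : F} {f g : ℝ → F} (hg : IntervalIntegrable g volume 0 t)
    (hf : ∀ s ∈ Icc 0 t, f s = c + ∫ r in (0:ℝ)..s, g r)
    (hgf : ∀ r ∈ Icc 0 t, ‖g r‖ ≤ L * ‖f r‖ + B) :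
    ∀ s ∈ Icc 0 t, ‖f s‖ ≤ 2 * (‖c‖ + B * t) := by
  have hcont : ContinuousOn f (Icc 0 t) := by
    have hprim := intervalIntegral.continuousOn_primitive_interval' hg left_mem_uIcc
    rw [uIcc_of_le ht] at hprim
    exact (continuousOn_const.add hprim).congr hf
  have hbdd : BddAbove ((‖f ·‖) '' Icc 0 t) :=
    (isCompact_Icc.image_of_continuousOn hcont.norm).bddAbove
  set φ := sSup ((‖f ·‖) '' Icc 0 t)
  have hfφ : ∀ s ∈ Icc 0 t, ‖f s‖ ≤ φ := fun s hs => le_csSup hbdd (mem_image_of_mem _ hs)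
  have hφ : 0 ≤ φ := (norm_nonneg _).trans (hfφ 0 (left_mem_Icc.2 ht))
  have hLφB : 0 ≤ L * φ + B := by
    have h₀ := left_mem_Icc.2 ht
    nlinarith [norm_nonneg (g 0), hgf 0 h₀, hfφ 0 h₀]
  have hφle : φ ≤ ‖c‖ + (L * φ + B) * t := by
    refine csSup_le ((nonempty_Icc.2 ht).image _) ?_
    rintro _ ⟨s, hs, rfl⟩
    have hint : ‖∫ r in (0:ℝ)..s, g r‖ ≤ (L * φ + B) * |s - 0| :=
      intervalIntegral.norm_integral_le_of_norm_le_const fun r hr => by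
        rw [uIoc_of_le hs.1] at hr
        have hr' : r ∈ Icc 0 t := ⟨hr.1.le, hr.2.trans hs.2⟩
        exact (hgf r hr').trans (by gcongr; exact hfφ r hr')
    calc ‖f s‖ ≤ ‖c‖ + ‖∫ r in (0:ℝ)..s, g r‖ := hf s hs ▸ norm_add_le _ _
      _ ≤ ‖c‖ + (L * φ + B) * t := by
        rw [sub_zero, abs_of_nonneg hs.1] at hint
        gcongr
        exact hint.trans (by gcongr; exact hs.2)
  intro s hs
  nlinarith [hfφ s hs, mul_le_mul_of_nonneg_left hLt hφ]

end

lemma exists_tendsto_nhdsNE_zero_of_norm_sub_le {F : Type*} [NormedAddCommGroup F]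
    [CompleteSpace F] {q : ℝ → F} {C δ : ℝ} (hδ : 0 < δ)
    (hq : ∀ u v, u ≠ 0 → |u| < δ → v ≠ 0 → |v| < δ → ‖q u - q v‖ ≤ C * (|u| + |v|)) :
    ∃ D, Tendsto q (𝓝[≠] 0) (𝓝 D) := by
  refine cauchy_map_iff_exists_tendsto.mp (Metric.cauchy_iff.2 ⟨inferInstance, fun ε hε => ?_⟩)
  set η := min δ (ε / (2 * |C| + 1))
  have hη : 0 < η := lt_min hδ (by positivity)
  have hηε : (2 * |C| + 1) * η ≤ ε := (le_div_iff₀' (by positivity)).1 (min_le_right _ _)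
  refine ⟨q '' (Metric.ball 0 η \ {0}),
    image_mem_map (sdiff_mem_nhdsWithin_compl (Metric.ball_mem_nhds 0 hη) _), ?_⟩
  rintro _ ⟨u, ⟨hu, hu0⟩, rfl⟩ _ ⟨v, ⟨hv, hv0⟩, rfl⟩
  rw [Metric.mem_ball, Real.dist_0_eq_abs] at hu hv
  calc dist (q u) (q v) = ‖q u - q v‖ := dist_eq_norm _ _
    _ ≤ C * (|u| + |v|) :=
      hq u v hu0 (hu.trans_le (min_le_left _ _)) hv0 (hv.trans_le (min_le_left _ _))
    _ ≤ |C| * (2 * η) :=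
      mul_le_mul (le_abs_self C) (by linarith) (by positivity) (abs_nonneg C)
    _ < ε := by nlinarith

section
variable {E : Type*} [NormedAddCommGroup E] [NormedSpace ℝ E]

lemma norm_inv_smul_le_of_norm_le_sq {R a b w : E} {u C : ℝ} (hC : 0 ≤ C)
    (hR : ‖R‖ ≤ C * ‖b - a‖ ^ 2) (hba : ‖b - a‖ ≤ 2 * ‖u • w‖) :
    ‖u⁻¹ • R‖ ≤ 4 * C * ‖w‖ ^ 2 * |u| := by
  rcases eq_or_ne u 0 with rfl | hu
  · simp
  rw [norm_smul, Real.norm_eq_abs] at hba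
  rw [norm_smul, norm_inv, Real.norm_eq_abs]
  calc |u|⁻¹ * ‖R‖ ≤ |u|⁻¹ * (C * (2 * (|u| * ‖w‖)) ^ 2) := by gcongr; exact hR.trans (by gcongr)
    _ = 4 * C * ‖w‖ ^ 2 * |u| := by field_simp; ring

structure IsIntegralSolution (V : E → E) (X : ℝ → E) (M : Set E) (t : ℝ) (x : E) (y : ℝ → E) :
    Prop where
  intervalIntegrable : IntervalIntegrable (fun s => V (y s)) volume 0 t
  eq_add_integral : ∀ s ∈ Icc 0 t, y s = x + X s + ∫ r in (0:ℝ)..s, V (y r)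
  mapsTo : MapsTo y (Icc 0 t) M

namespace IsIntegralSolution

variable {V : E → E} {X : ℝ → E} {M : Set E} {t L C u v : ℝ} {x x₁ x₂ w : E}
  {y₀ y₁ y₂ : ℝ → E}

lemma intervalIntegrable_of_mem (h₁ : IsIntegralSolution V X M t x₁ y₁) {s : ℝ}
    (hs : s ∈ Icc 0 t) : IntervalIntegrable (fun r => V (y₁ r)) volume 0 s :=
  h₁.intervalIntegrable.mono_set (uIcc_subset_uIcc_left (Icc_subset_uIcc hs))

lemma sub_eq_add_integral (h₁ : IsIntegralSolution V X M t x₁ y₁)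
    (h₂ : IsIntegralSolution V X M t x₂ y₂) :
    ∀ s ∈ Icc 0 t, y₁ s - y₂ s = (x₁ - x₂) + ∫ r in (0:ℝ)..s, (V (y₁ r) - V (y₂ r)) := by
  intro s hs
  rw [h₁.eq_add_integral s hs, h₂.eq_add_integral s hs,
    intervalIntegral.integral_sub (h₁.intervalIntegrable_of_mem hs)
      (h₂.intervalIntegrable_of_mem hs)]
  abel

lemma norm_sub_le_two_mul (h₁ : IsIntegralSolution V X M t x₁ y₁)
    (h₂ : IsIntegralSolution V X M t x₂ y₂)
    (ht : 0 ≤ t) (hL : 0 ≤ L) (hLt : L * t ≤ 1 / 2)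
    (hV : ∀ a ∈ M, ∀ b ∈ M, ‖V b - V a‖ ≤ L * ‖b - a‖) :
    ∀ s ∈ Icc 0 t, ‖y₁ s - y₂ s‖ ≤ 2 * ‖x₁ - x₂‖ := by
  intro s hs
  simpa using norm_le_two_mul_of_eq_add_integral (B := 0) ht hL hLt
    (h₁.intervalIntegrable.sub h₂.intervalIntegrable) (h₁.sub_eq_add_integral h₂)
    (fun r hr => by simpa using hV _ (h₂.mapsTo hr) _ (h₁.mapsTo hr)) s hs

lemma inv_smul_sub_eq_add_integral (h₀ : IsIntegralSolution V X M t x y₀)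
    (h₁ : IsIntegralSolution V X M t (x + u • w) y₁) (hu : u ≠ 0) :
    ∀ s ∈ Icc 0 t,
      u⁻¹ • (y₁ s - y₀ s) = w + ∫ r in (0:ℝ)..s, u⁻¹ • (V (y₁ r) - V (y₀ r)) := by
  intro s hs
  rw [h₁.sub_eq_add_integral h₀ s hs, add_sub_cancel_left, smul_add, smul_smul,
    inv_mul_cancel₀ hu, one_smul, intervalIntegral.integral_smul]

lemma norm_inv_smul_sub_le (h₀ : IsIntegralSolution V X M t x y₀)
    (h₁ : IsIntegralSolution V X M t (x + u • w) y₁) (ht : 0 ≤ t) (hL : 0 ≤ L)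
    (hLt : L * t ≤ 1 / 2) (hV : ∀ a ∈ M, ∀ b ∈ M, ‖V b - V a‖ ≤ L * ‖b - a‖) :
    ∀ s ∈ Icc 0 t, ‖u⁻¹ • (y₁ s - y₀ s)‖ ≤ 2 * ‖w‖ := by
  intro s hs
  rcases eq_or_ne u 0 with rfl | hu
  · simp
  have h := h₁.norm_sub_le_two_mul h₀ ht hL hLt hV s hs
  rw [add_sub_cancel_left, norm_smul] at h
  rw [norm_smul, norm_inv]
  calc ‖u‖⁻¹ * ‖y₁ s - y₀ s‖ ≤ ‖u‖⁻¹ * (2 * (‖u‖ * ‖w‖)) := by gcongr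
    _ = 2 * ‖w‖ := by field_simp

lemma norm_inv_smul_sub_sub_inv_smul_sub_le (h₀ : IsIntegralSolution V X M t x y₀)
    (h₁ : IsIntegralSolution V X M t (x + u • w) y₁)
    (h₂ : IsIntegralSolution V X M t (x + v • w) y₂) (hu : u ≠ 0) (hv : v ≠ 0) (ht : 0 ≤ t)
    (hL : 0 ≤ L) (hLt : L * t ≤ 1 / 2) (hC : 0 ≤ C)
    (hV : ∀ a ∈ M, ∀ b ∈ M, ‖V b - V a‖ ≤ L * ‖b - a‖)
    (A : E → E →L[ℝ] E) (hA : ∀ a ∈ M, ‖A a‖ ≤ L)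
    (hR : ∀ a ∈ M, ∀ b ∈ M, ‖V b - V a - A a (b - a)‖ ≤ C * ‖b - a‖ ^ 2) :
    ‖u⁻¹ • (y₁ t - y₀ t) - v⁻¹ • (y₂ t - y₀ t)‖ ≤ 8 * C * ‖w‖ ^ 2 * t * (|u| + |v|) := by
  have hf : ∀ s ∈ Icc 0 t, u⁻¹ • (y₁ s - y₀ s) - v⁻¹ • (y₂ s - y₀ s) =
      0 + ∫ r in (0:ℝ)..s, (u⁻¹ • (V (y₁ r) - V (y₀ r)) - v⁻¹ • (V (y₂ r) - V (y₀ r))) := by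
    intro s hs
    rw [h₀.inv_smul_sub_eq_add_integral h₁ hu s hs, h₀.inv_smul_sub_eq_add_integral h₂ hv s hs,
      intervalIntegral.integral_sub (f := fun r => u⁻¹ • (V (y₁ r) - V (y₀ r)))
        (g := fun r => v⁻¹ • (V (y₂ r) - V (y₀ r)))
        (((h₁.intervalIntegrable_of_mem hs).sub (h₀.intervalIntegrable_of_mem hs)).smul u⁻¹)
        (((h₂.intervalIntegrable_of_mem hs).sub (h₀.intervalIntegrable_of_mem hs)).smul v⁻¹)]
    abel
  have hg : ∀ r ∈ Icc 0 t, ‖u⁻¹ • (V (y₁ r) - V (y₀ r)) - v⁻¹ • (V (y₂ r) - V (y₀ r))‖ ≤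
      L * ‖u⁻¹ • (y₁ r - y₀ r) - v⁻¹ • (y₂ r - y₀ r)‖ + 4 * C * ‖w‖ ^ 2 * (|u| + |v|) := by
    intro r hr
    set a := y₀ r
    have hdecomp : u⁻¹ • (V (y₁ r) - V a) - v⁻¹ • (V (y₂ r) - V a) =
        A a (u⁻¹ • (y₁ r - a) - v⁻¹ • (y₂ r - a)) +
          (u⁻¹ • (V (y₁ r) - V a - A a (y₁ r - a)) - v⁻¹ • (V (y₂ r) - V a - A a (y₂ r - a))) := by
      simp only [map_sub, map_smul]
      module
    have hR₁ := norm_inv_smul_le_of_norm_le_sq hC (hR a (h₀.mapsTo hr) _ (h₁.mapsTo hr))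
      (by simpa using h₁.norm_sub_le_two_mul h₀ ht hL hLt hV r hr)
    have hR₂ := norm_inv_smul_le_of_norm_le_sq hC (hR a (h₀.mapsTo hr) _ (h₂.mapsTo hr))
      (by simpa using h₂.norm_sub_le_two_mul h₀ ht hL hLt hV r hr)
    rw [hdecomp]
    refine (norm_add_le _ _).trans ?_
    gcongr
    · exact (A a).le_of_opNorm_le (hA a (h₀.mapsTo hr)) _
    · exact (norm_sub_le _ _).trans (by linarith)
  refine (norm_le_two_mul_of_eq_add_integral ht hL hLt
    (((h₁.intervalIntegrable.sub h₀.intervalIntegrable).smul u⁻¹).sub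
      ((h₂.intervalIntegrable.sub h₀.intervalIntegrable).smul v⁻¹)) hf hg t
      (right_mem_Icc.2 ht)).trans_eq ?_
  rw [norm_zero]
  ring

end IsIntegralSolution

end

section
variable {ι : Type*} [Fintype ι] [DecidableEq ι] {F : Type*} [NormedAddCommGroup F]
  [NormedSpace ℝ F]

lemma ContinuousLinearMap.opNorm_le_sum_norm_apply_single (A : (ι → ℝ) →L[ℝ] F) :
    ‖A‖ ≤ ∑ j, ‖A (Pi.single j 1)‖ := by
  refine A.opNorm_le_bound (by positivity) fun v => ?_
  calc ‖A v‖ = ‖∑ j, v j • A (Pi.single j 1)‖ := by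
        conv_lhs => rw [pi_eq_sum_univ' v]
        simp [map_sum]
    _ ≤ ∑ j, ‖v‖ * ‖A (Pi.single j 1)‖ := by
        refine norm_sum_le_of_le _ fun j _ => ?_
        rw [norm_smul]
        gcongr
        exact norm_le_pi_norm v j
    _ = (∑ j, ‖A (Pi.single j 1)‖) * ‖v‖ := by rw [← Finset.mul_sum, mul_comm]

lemma Convex.norm_image_sub_le_of_norm_fderiv_apply_single_le {M : Set (ι → ℝ)}
    (hM : Convex ℝ M) {q : (ι → ℝ) → F} (hq : ∀ y ∈ M, DifferentiableAt ℝ q y) {S : ι → ℝ}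
    (hS : ∀ y ∈ M, ∀ j, ‖fderiv ℝ q y (Pi.single j 1)‖ ≤ S j) {a b : ι → ℝ} (ha : a ∈ M)
    (hb : b ∈ M) :
    ‖q b - q a‖ ≤ (∑ j, S j) * ‖b - a‖ :=
  hM.norm_image_sub_le_of_norm_fderiv_le hq (fun y hy =>
    (fderiv ℝ q y).opNorm_le_sum_norm_apply_single.trans (Finset.sum_le_sum fun j _ => hS y hy j))
    ha hb

end

lemma List.foldr_iterate_eq_foldr_filter {ι α : Type*} (p : ι → α → α) (β : ι → ℕ) (g : α)
    (l : List ι) :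
    l.foldr (fun i h => (p i)^[β i] h) g
      = (l.filter (fun i => β i ≠ 0)).foldr (fun i h => (p i)^[β i] h) g := by
  induction l with
  | nil => rfl
  | cons a l ih => by_cases h : β a = 0 <;> simp [h, ih]

section
variable {n : ℕ} {M : Set (Fin n → ℝ)}

lemma mderiv'_eq_foldr {β : Fin n → ℕ} {l : List (Fin n)} (hl : l.Pairwise (· < ·))
    (hβ : ∀ i, i ∈ l ↔ β i ≠ 0) (g : (Fin n → ℝ) → ℝ) :
    mderiv' β g = l.foldr (fun i h => (pderiv' i)^[β i] h) g := by
  rw [mderiv', List.foldr_iterate_eq_foldr_filter, List.Subset.antisymm_of_pairwise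
    ((List.pairwise_lt_finRange n).filter _) hl (fun i => by simp [hβ]) (fun i => by simp [hβ])]

lemma mderiv'_single (j : Fin n) {m : ℕ} (hm : m ≠ 0) (g : (Fin n → ℝ) → ℝ) :
    mderiv' (Pi.single j m) g = (pderiv' j)^[m] g := by
  rw [mderiv'_eq_foldr (l := [j]) (List.pairwise_singleton _ _)]
  · simp
  · intro i
    by_cases h : i = j <;> simp [h, hm]

lemma mderiv'_single_add_single {a b : Fin n} (hab : a < b) (g : (Fin n → ℝ) → ℝ) :
    mderiv' (Pi.single a 1 + Pi.single b 1) g = pderiv' a (pderiv' b g) := by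
  rw [mderiv'_eq_foldr (l := [a, b]) (by simp [hab])]
  · simp [hab.ne']
  · intro i
    by_cases ha : i = a <;> by_cases hb : i = b <;> simp [Pi.single_apply, ha, hb]

lemma pderiv'_pderiv'_eq_fderiv_fderiv {g : (Fin n → ℝ) → ℝ} (hg : ContDiff ℝ 2 g)
    (l j : Fin n) (y : Fin n → ℝ) :
    pderiv' l (pderiv' j g) y = fderiv ℝ (fderiv ℝ g) y (Pi.single l 1) (Pi.single j 1) := by
  have hd : DifferentiableAt ℝ (fderiv ℝ g) y :=
    (hg.fderiv_right (m := 1) le_rfl).differentiable one_ne_zero y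
  change fderiv ℝ (fun z => fderiv ℝ g z (Pi.single j 1)) y (Pi.single l 1) = _
  rw [fderiv_clm_apply hd (differentiableAt_const _)]
  simp

lemma pderiv'_comm {g : (Fin n → ℝ) → ℝ} (hg : ContDiff ℝ 2 g) (l j : Fin n) (y : Fin n → ℝ) :
    pderiv' l (pderiv' j g) y = pderiv' j (pderiv' l g) y := by
  rw [pderiv'_pderiv'_eq_fderiv_fderiv hg, pderiv'_pderiv'_eq_fderiv_fderiv hg]
  exact hg.contDiffAt.isSymmSndFDerivAt (by simp) _ _

lemma bddAbove_abs_pderiv'_pderiv' {g : (Fin n → ℝ) → ℝ} (hg : ContDiff ℝ 2 g)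
    (hbdd : ∀ β : Fin n → ℕ, ∑ i, β i = 2 → BddAbove ((fun x => |mderiv' β g x|) '' M))
    (j l : Fin n) : BddAbove ((fun y => |pderiv' l (pderiv' j g) y|) '' M) := by
  -- `mderiv'` only produces `∂_l ∂_j` with `l ≤ j`, so `j < l` needs symmetry of the Hessian.
  rcases lt_trichotomy l j with hlj | rfl | hjl
  · have h := hbdd (Pi.single l 1 + Pi.single j 1) (by simp [Finset.sum_add_distrib])
    rwa [mderiv'_single_add_single hlj] at h
  · simpa [mderiv'_single l two_ne_zero] using hbdd (Pi.single l 2) (by simp)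
  · have h := hbdd (Pi.single j 1 + Pi.single l 1) (by simp [Finset.sum_add_distrib])
    rw [mderiv'_single_add_single hjl] at h
    simpa only [pderiv'_comm hg j l] using h

lemma exists_abs_sub_sub_fderiv_le_mul_sq (hM : Convex ℝ M) {g : (Fin n → ℝ) → ℝ}
    (hg : ContDiff ℝ 2 g) (hbdd : ∀ j l, BddAbove ((fun y => |pderiv' l (pderiv' j g) y|) '' M)) :
    ∃ C, 0 ≤ C ∧ ∀ a ∈ M, ∀ b ∈ M, |g b - g a - fderiv ℝ g a (b - a)| ≤ C * ‖b - a‖ ^ 2 := by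
  set S : Fin n → Fin n → ℝ := fun j l => sSup ((fun y => |pderiv' l (pderiv' j g) y|) '' M)
  have hS : ∀ j l, ∀ y ∈ M, |pderiv' l (pderiv' j g) y| ≤ S j l := fun j l y hy =>
    le_csSup (hbdd j l) (mem_image_of_mem _ hy)
  have hS₀ : ∀ j l, 0 ≤ S j l := fun j l =>
    Real.sSup_nonneg (by rintro _ ⟨y, _, rfl⟩; exact abs_nonneg _)
  have hpderiv : ∀ j, ∀ y ∈ M, ∀ z ∈ M,
      |pderiv' j g z - pderiv' j g y| ≤ (∑ l, S j l) * ‖z - y‖ := fun j y hy z hz =>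
    hM.norm_image_sub_le_of_norm_fderiv_apply_single_le
      (fun y _ => ((hg.fderiv_right (m := 1) le_rfl).clm_apply contDiff_const).differentiable
        one_ne_zero y) (fun y hy l => hS j l y hy) hy hz
  have hC₀ : 0 ≤ ∑ j, ∑ l, S j l :=
    Finset.sum_nonneg fun j _ => Finset.sum_nonneg fun l _ => hS₀ j l
  refine ⟨_, hC₀, fun a ha b hb => hM.norm_image_sub_sub_fderiv_le
    (fun y _ => hg.differentiable two_ne_zero y) hC₀ (fun y hy z hz => ?_) ha hb⟩
  calc ‖fderiv ℝ g z - fderiv ℝ g y‖ ≤ ∑ j, |pderiv' j g z - pderiv' j g y| :=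
        (fderiv ℝ g z - fderiv ℝ g y).opNorm_le_sum_norm_apply_single
    _ ≤ ∑ j, (∑ l, S j l) * ‖z - y‖ := Finset.sum_le_sum fun j _ => hpderiv j y hy z hz
    _ = (∑ j, ∑ l, S j l) * ‖z - y‖ := (Finset.sum_mul _ _ _).symm

lemma DjNorm_nonneg (j : ℕ) (V : (Fin n → ℝ) → Fin n → ℝ) (U : Set (Fin n → ℝ)) :
    0 ≤ DjNorm j V U :=
  Finset.sum_nonneg fun _ _ => Finset.sum_nonneg fun _ _ =>
    Real.sSup_nonneg (by rintro _ ⟨x, _, rfl⟩; exact abs_nonneg _)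

lemma sum_sSup_abs_pderiv'_le_DjNorm_one (V : (Fin n → ℝ) → Fin n → ℝ) :
    ∑ j, ∑ k, sSup ((fun z => |pderiv' j (fun w => V w k) z|) '' M) ≤ DjNorm 1 V M := by
  set e : Fin n → Fin n → Fin (1 + 1) := fun j => Pi.single j 1
  have he : ∀ j, (fun i => ((e j i : Fin (1 + 1)) : ℕ)) = Pi.single j 1 := fun j =>
    funext fun i => by by_cases h : i = j <;> simp [e, h]
  have hinj : Function.Injective e := fun j j' h => by
    by_contra hne
    simpa [e, hne] using congrFun h j
  calc ∑ j, ∑ k, sSup ((fun z => |pderiv' j (fun w => V w k) z|) '' M)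
      = ∑ β ∈ Finset.univ.image e, ∑ k,
          sSup ((fun z => |mderiv' (fun i => (β i : ℕ)) (fun w => V w k) z|) '' M) := by
        rw [Finset.sum_image hinj.injOn]
        simp only [he, mderiv'_single _ one_ne_zero, Function.iterate_one]
    _ ≤ DjNorm 1 V M := by
      refine Finset.sum_le_sum_of_subset_of_nonneg (fun β hβ => ?_) fun β _ _ => ?_
      · obtain ⟨j, -, rfl⟩ := Finset.mem_image.1 hβ
        simp [he]
      · exact Finset.sum_nonneg fun k _ =>
          Real.sSup_nonneg (by rintro _ ⟨x, _, rfl⟩; exact abs_nonneg _)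

variable {V : (Fin n → ℝ) → Fin n → ℝ}

lemma fderiv_apply_apply {a : Fin n → ℝ} (hV : DifferentiableAt ℝ V a) (w : Fin n → ℝ)
    (k : Fin n) : fderiv ℝ V a w k = fderiv ℝ (fun z => V z k) a w := by
  rw [fderiv_apply hV]
  rfl

lemma norm_fderiv_le_DjNorm_one (hV : Differentiable ℝ V)
    (hVbdd : ∀ β : Fin n → ℕ, ∑ i, β i = 1 → ∀ k,
      BddAbove ((fun x => |mderiv' β (fun z => V z k) x|) '' M))
    {a : Fin n → ℝ} (ha : a ∈ M) : ‖fderiv ℝ V a‖ ≤ DjNorm 1 V M := by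
  have hbdd : ∀ j k, BddAbove ((fun z => |pderiv' j (fun w => V w k) z|) '' M) := fun j k => by
    simpa [mderiv'_single j one_ne_zero] using hVbdd (Pi.single j 1) (by simp) k
  have hentry : ∀ j k, ‖fderiv ℝ V a (Pi.single j 1) k‖ ≤
      sSup ((fun z => |pderiv' j (fun w => V w k) z|) '' M) := fun j k => by
    rw [Real.norm_eq_abs, fderiv_apply_apply (hV a)]
    exact le_csSup (hbdd j k) (mem_image_of_mem _ ha)
  calc ‖fderiv ℝ V a‖ ≤ ∑ j, ‖fderiv ℝ V a (Pi.single j 1)‖ :=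
        (fderiv ℝ V a).opNorm_le_sum_norm_apply_single
    _ ≤ ∑ j, ∑ k, sSup ((fun z => |pderiv' j (fun w => V w k) z|) '' M) :=
        Finset.sum_le_sum fun j _ => (pi_norm_le_iff_of_nonneg (Finset.sum_nonneg fun k _ =>
          (norm_nonneg _).trans (hentry j k))).2 fun k => (hentry j k).trans
          (Finset.single_le_sum (fun k' _ => (norm_nonneg _).trans (hentry j k'))
            (Finset.mem_univ k))
    _ ≤ DjNorm 1 V M := sum_sSup_abs_pderiv'_le_DjNorm_one V

lemma exists_norm_sub_sub_fderiv_le_mul_sq (hM : Convex ℝ M) (hV : ContDiff ℝ 2 V)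
    (hVbdd : ∀ β : Fin n → ℕ, ∑ i, β i = 2 → ∀ k,
      BddAbove ((fun x => |mderiv' β (fun z => V z k) x|) '' M)) :
    ∃ C, 0 ≤ C ∧ ∀ a ∈ M, ∀ b ∈ M, ‖V b - V a - fderiv ℝ V a (b - a)‖ ≤ C * ‖b - a‖ ^ 2 := by
  choose C hC₀ hC using fun k => exists_abs_sub_sub_fderiv_le_mul_sq hM (contDiff_pi.mp hV k)
    (bddAbove_abs_pderiv'_pderiv' (contDiff_pi.mp hV k) fun β hβ => hVbdd β hβ k)
  have hsum : 0 ≤ ∑ k, C k := Finset.sum_nonneg fun k _ => hC₀ k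
  refine ⟨_, hsum, fun a ha b hb => (pi_norm_le_iff_of_nonneg (by positivity)).2 fun k => ?_⟩
  rw [Pi.sub_apply, Pi.sub_apply, fderiv_apply_apply (hV.differentiable two_ne_zero a),
    Real.norm_eq_abs]
  exact (hC k a ha b hb).trans (by
    gcongr
    exact Finset.single_le_sum (fun k _ => hC₀ k) (Finset.mem_univ k))

lemma tstar_le (t₀ : ℝ) : tstar V M t₀ ≤ t₀ := by
  unfold tstar
  split_ifs
  exacts [le_rfl, min_le_right _ _]

lemma DjNorm_one_mul_le_half {t₀ t : ℝ} (ht : t ≤ tstar V M t₀) : DjNorm 1 V M * t ≤ 1 / 2 := by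
  unfold tstar at ht
  split_ifs at ht with h
  · simp [h]
  · have hpos : 0 < DjNorm 1 V M := (DjNorm_nonneg 1 V M).lt_of_ne' h
    have := ht.trans (min_le_left _ _)
    rw [le_div_iff₀ (by positivity)] at this
    linarith

end

theorem stmt5_general {n : ℕ} (t₀ : ℝ)
    (K M : Set (Fin n → ℝ)) (hMconv : Convex ℝ M)
    (V : (Fin n → ℝ) → Fin n → ℝ) (hV : ContDiff ℝ 3 V)
    (hVbdd : ∀ j : ℕ, j ≤ 3 → ∀ β : Fin n → ℕ, (∑ i, β i) = j → ∀ k : Fin n,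
      BddAbove ((fun x => |mderiv' β (fun z => V z k) x|) '' M))
    (X : ℝ → Fin n → ℝ)
    (Y : (Fin n → ℝ) → ℝ → Fin n → ℝ)
    (hYint : ∀ x ∈ ⋃ y ∈ K, Metric.ball y (3:ℝ), ∀ t ∈ Set.Icc (0:ℝ) t₀,
      IntervalIntegrable (fun s => V (Y x s)) volume 0 t)
    (hY : ∀ x ∈ ⋃ y ∈ K, Metric.ball y (3:ℝ), ∀ t ∈ Set.Icc (0:ℝ) t₀,
      Y x t = x + X t + ∫ s in (0:ℝ)..t, V (Y x s))
    (hYM : ∀ x ∈ ⋃ y ∈ K, Metric.ball y (3:ℝ), ∀ t ∈ Set.Icc (0:ℝ) t₀, Y x t ∈ M) :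
    ∀ t ∈ Set.Ioc (0:ℝ) (tstar V M t₀), ∀ x ∈ ⋃ y ∈ K, Metric.ball y (2:ℝ), ∀ i : Fin n,
      ∃ D : Fin n → ℝ,
        Filter.Tendsto (fun u : ℝ => u⁻¹ • (Y (x + u • (Pi.single i 1 : Fin n → ℝ)) t - Y x t))
          (𝓝[≠] (0:ℝ)) (𝓝 D) ∧ ‖D‖ ≤ 2 := by
  rintro t ⟨ht, htstar⟩ x hx i
  obtain ⟨y, hyK, hxy⟩ := mem_iUnion₂.1 hx
  have hsol : ∀ z ∈ Metric.ball x 1, IsIntegralSolution V X M t z (Y z) := fun z hz => by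
    have hz : z ∈ ⋃ y ∈ K, Metric.ball y (3:ℝ) := mem_iUnion₂.2 ⟨y, hyK, by
      rw [Metric.mem_ball] at *
      linarith [dist_triangle z x y]⟩
    have hIcc : Icc 0 t ⊆ Icc 0 t₀ := Icc_subset_Icc_right (htstar.trans (tstar_le t₀))
    exact ⟨hYint z hz t (hIcc (right_mem_Icc.2 ht.le)), fun s hs => hY z hz s (hIcc hs),
      fun s hs => hYM z hz s (hIcc hs)⟩
  have hV₂ : ContDiff ℝ 2 V := hV.of_le (by norm_num)
  have hA : ∀ a ∈ M, ‖fderiv ℝ V a‖ ≤ DjNorm 1 V M := fun a ha =>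
    norm_fderiv_le_DjNorm_one (hV₂.differentiable two_ne_zero) (hVbdd 1 (by norm_num)) ha
  obtain ⟨C, hC₀, hC⟩ :=
    exists_norm_sub_sub_fderiv_le_mul_sq hMconv hV₂ (hVbdd 2 (by norm_num))
  have hLip : ∀ a ∈ M, ∀ b ∈ M, ‖V b - V a‖ ≤ DjNorm 1 V M * ‖b - a‖ := fun a ha b hb =>
    hMconv.norm_image_sub_le_of_norm_fderiv_le (fun z _ => hV₂.differentiable two_ne_zero z) hA
      ha hb
  have hLt := DjNorm_one_mul_le_half htstar
  have he : ‖(Pi.single i 1 : Fin n → ℝ)‖ = 1 := by rw [Pi.norm_single, norm_one]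
  have hmem : ∀ u : ℝ, |u| < 1 → x + u • (Pi.single i 1 : Fin n → ℝ) ∈ Metric.ball x 1 :=
    fun u hu => by simpa [norm_smul, he] using hu
  have hsolx := hsol x (Metric.mem_ball_self one_pos)
  obtain ⟨D, hD⟩ := exists_tendsto_nhdsNE_zero_of_norm_sub_le one_pos fun u v hu hu₁ hv hv₁ =>
    hsolx.norm_inv_smul_sub_sub_inv_smul_sub_le (hsol _ (hmem u hu₁)) (hsol _ (hmem v hv₁)) hu hv
      ht.le (DjNorm_nonneg 1 V M) hLt hC₀ hLip (fderiv ℝ V) hA hC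
  refine ⟨D, hD, le_of_tendsto hD.norm ?_⟩
  filter_upwards [nhdsWithin_le_nhds (Metric.ball_mem_nhds 0 one_pos)] with u hu
  rw [mem_ball_zero_iff, Real.norm_eq_abs] at hu
  simpa [he] using hsolx.norm_inv_smul_sub_le (hsol _ (hmem u hu)) ht.le (DjNorm_nonneg 1 V M)
    hLt hLip t (right_mem_Icc.2 ht.le)

/-- In the flow setup, for all `t ∈ (0, t*]`, `x ∈ K₂` and `i ∈ {1,…,n}`,
the derivative `D_iY^x(t) = lim_{u→0} (Y^{x+u e_i}(t) − Y^x(t))/u` exists and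
`‖D_iY^x(t)‖ ≤ 2`. -/
theorem stmt5 {n : ℕ} (hn : 1 ≤ n) (t₀ : ℝ) (ht₀ : 0 < t₀)
    (K M : Set (Fin n → ℝ)) (hMconv : Convex ℝ M)
    (V : (Fin n → ℝ) → Fin n → ℝ) (hV : ContDiff ℝ 3 V)
    (hVbdd : ∀ j : ℕ, j ≤ 3 → ∀ β : Fin n → ℕ, (∑ i, β i) = j → ∀ k : Fin n,
      BddAbove ((fun x => |mderiv' β (fun z => V z k) x|) '' M))
    (X : ℝ → Fin n → ℝ) (hX0 : X 0 = 0)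
    (Y : (Fin n → ℝ) → ℝ → Fin n → ℝ)
    (hYint : ∀ x ∈ ⋃ y ∈ K, Metric.ball y (3:ℝ), ∀ t ∈ Set.Icc (0:ℝ) t₀,
      IntervalIntegrable (fun s => V (Y x s)) volume 0 t)
    (hY : ∀ x ∈ ⋃ y ∈ K, Metric.ball y (3:ℝ), ∀ t ∈ Set.Icc (0:ℝ) t₀,
      Y x t = x + X t + ∫ s in (0:ℝ)..t, V (Y x s))
    (hYM : ∀ x ∈ ⋃ y ∈ K, Metric.ball y (3:ℝ), ∀ t ∈ Set.Icc (0:ℝ) t₀, Y x t ∈ M) :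
    ∀ t ∈ Set.Ioc (0:ℝ) (tstar V M t₀), ∀ x ∈ ⋃ y ∈ K, Metric.ball y (2:ℝ), ∀ i : Fin n,
      ∃ D : Fin n → ℝ,
        Filter.Tendsto (fun u : ℝ => u⁻¹ • (Y (x + u • (Pi.single i 1 : Fin n → ℝ)) t - Y x t))
          (𝓝[≠] (0:ℝ)) (𝓝 D) ∧ ‖D‖ ≤ 2 :=
  stmt5_general t₀ K M hMconv V hV hVbdd X Y hYint hY hYM
end

section
/- Let κ be a Markov kernel from ℝ² to ℝ² (with the Borel σ-algebras) such that for every (y,s) ∈ ℝ², the measure κ((y+2π, s), ·) is the pushforward of κ((y,s), ·) under the map (u,v) ↦ (u+2π, v). Let γ : ℝ² → 𝕊¹×ℝ be given by γ(y,s) = (e^{iy}, s), where 𝕊¹ = {z ∈ ℂ : |z| = 1}. Then there exists a Markov kernel κ^𝕊 from 𝕊¹×ℝ to 𝕊¹×ℝ such that for all (y,s) ∈ ℝ² and all Borel sets E ⊆ 𝕊¹×ℝ, κ^𝕊(γ(y,s), E) = κ((y,s), γ^{-1}(E)); in particular the map γ(y,s) ↦ γ_*κ((y,s), ·) is well defined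 (independent of the choice of representative (y,s)). -/
/-! A kernel that is constant on the fibres of `π` descends along `π` as soon as `π` has a
measurable section `σ`: take `κ ∘ σ`. For the wrapping map `γ` the section is
`(z, s) ↦ (arg z, s)`, and constancy of `γ_* κ` on the fibres `(y + 2πℤ, s)` is the
shift invariance of `κ`. -/

open MeasureTheory ProbabilityTheory

/-- The Borel σ-algebra on the unit circle `𝕊¹ ⊆ ℂ`. -/
noncomputable instance : MeasurableSpace Circle := borel Circle

instance : BorelSpace Circle := ⟨rfl⟩

theorem ProbabilityTheory.Kernel.exists_factorization_of_rightInverse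
    {α α' β : Type*} [MeasurableSpace α] [MeasurableSpace α'] [MeasurableSpace β]
    (κ : Kernel α β) [IsMarkovKernel κ] {π : α → α'} {σ : α' → α} (hσ : Measurable σ)
    (hπσ : Function.RightInverse σ π) (hκ : ∀ x x', π x = π x' → κ x = κ x') :
    ∃ κ' : Kernel α' β, IsMarkovKernel κ' ∧ ∀ x, κ' (π x) = κ x :=
  ⟨κ.comap σ hσ, inferInstance, fun x => by
    rw [Kernel.comap_apply]
    exact hκ _ _ (hπσ _)⟩

lemma measurable_circleExp_prodMap :
    Measurable (fun p : ℝ × ℝ => (Circle.exp p.1, p.2)) :=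
  (Circle.exp.continuous.measurable.comp measurable_fst).prodMk measurable_snd

lemma Circle.measurable_coe : @Measurable Circle ℂ _ _ (↑) :=
  Continuous.measurable (α := Circle) continuous_subtype_val

lemma measurable_arg_prodMap :
    Measurable (fun q : Circle × ℝ => (Complex.arg (q.1 : ℂ), q.2)) :=
  (Complex.measurable_arg.comp (Circle.measurable_coe.comp
    measurable_fst)).prodMk measurable_snd

lemma periodic_map_circleExp_prodMap (κ : Kernel (ℝ × ℝ) (ℝ × ℝ))
    (hκ : ∀ y s : ℝ, κ (y + 2 * Real.pi, s)
      = (κ (y, s)).map (fun p : ℝ × ℝ => (p.1 + 2 * Real.pi, p.2))) (s : ℝ) :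
    Function.Periodic
      (fun y => (κ (y, s)).map (fun p : ℝ × ℝ => (Circle.exp p.1, p.2))) (2 * Real.pi) := by
  intro y
  have hshift : Measurable (fun p : ℝ × ℝ => (p.1 + 2 * Real.pi, p.2)) :=
    (measurable_fst.add_const _).prodMk measurable_snd
  simp only [hκ y s, Measure.map_map measurable_circleExp_prodMap hshift, Function.comp_def,
    Circle.exp_add_two_pi]

lemma map_circleExp_prodMap_eq_of_eq (κ : Kernel (ℝ × ℝ) (ℝ × ℝ))
    (hκ : ∀ y s : ℝ, κ (y + 2 * Real.pi, s)
      = (κ (y, s)).map (fun p : ℝ × ℝ => (p.1 + 2 * Real.pi, p.2)))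
    {p q : ℝ × ℝ} (hpq : (Circle.exp p.1, p.2) = (Circle.exp q.1, q.2)) :
    (κ p).map (fun p : ℝ × ℝ => (Circle.exp p.1, p.2))
      = (κ q).map (fun p : ℝ × ℝ => (Circle.exp p.1, p.2)) := by
  obtain ⟨y, s⟩ := p
  obtain ⟨y', s'⟩ := q
  obtain ⟨hexp, rfl : s = s'⟩ := Prod.mk.inj hpq
  obtain ⟨m, rfl⟩ := Circle.exp_eq_exp.mp hexp
  exact (periodic_map_circleExp_prodMap κ hκ s).int_mul m y'

/-- If a Markov kernel `κ` on `ℝ²` commutes with the shift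
`(y,s) ↦ (y+2π,s)`, then it induces a Markov kernel `κ^𝕊` on `𝕊¹×ℝ` with
`κ^𝕊(γ(y,s), E) = κ((y,s), γ^{-1}(E))` for the wrapping map `γ(y,s) = (e^{iy}, s)`. -/
theorem stmt16 (κ : Kernel (ℝ × ℝ) (ℝ × ℝ)) [IsMarkovKernel κ]
    (hκ : ∀ y s : ℝ, κ (y + 2 * Real.pi, s)
      = (κ (y, s)).map (fun p : ℝ × ℝ => (p.1 + 2 * Real.pi, p.2))) :
    ∃ κS : Kernel (Circle × ℝ) (Circle × ℝ),
      IsMarkovKernel κS ∧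
      ∀ y s : ℝ, ∀ E : Set (Circle × ℝ), MeasurableSet E →
        κS (Circle.exp y, s) E
          = κ (y, s) ((fun p : ℝ × ℝ => (Circle.exp p.1, p.2)) ⁻¹' E) := by
  set γ : ℝ × ℝ → Circle × ℝ := fun p => (Circle.exp p.1, p.2)
  have hγ : Measurable γ := measurable_circleExp_prodMap
  have : IsMarkovKernel (κ.map γ) := Kernel.IsMarkovKernel.map κ hγ
  obtain ⟨κS, hκS, hfactor⟩ := (κ.map γ).exists_factorization_of_rightInverse
    (π := γ) measurable_arg_prodMap (fun q => Prod.ext (Circle.exp_arg q.1) rfl)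
    fun p q hpq => by
      simpa only [Kernel.map_apply κ hγ] using map_circleExp_prodMap_eq_of_eq κ hκ hpq
  refine ⟨κS, hκS, fun y s E hE => ?_⟩
  rw [hfactor (y, s), Kernel.map_apply κ hγ, Measure.map_apply hγ hE]
end

section
/- Let W : ℝ → ℝ be 2π-periodic and C³ (so W', W'', W''' are bounded), let y, s ∈ ℝ, and let X¹, X² : [0,1] → ℝ be functions. Suppose (Y¹,S¹) and (Y²,S²) satisfy, for i ∈ {1,2} and all t ∈ [0,1], Yⁱ_t = y + Xⁱ_t + ∫₀ᵗ W'(Yⁱ_r) Sⁱ_r dr and Sⁱ_t = s + ∫₀ᵗ W''(Yⁱ_r) dr. Let c₁ = ‖W'‖_∞·‖W'''‖_∞ + ‖W''‖_∞² and c₂ = ‖W''‖_∞. Then sup_{0≤r≤1} |Y¹_r − Y²_r| ≤ sup_{0≤r≤1} |X¹_r − X²_r| · (1 + (c₁ + c₂|s|)·exp(c₁ + c₂|s|)). -/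
/-!
Write `a = W'`, `b = W''` and `K = ‖W'‖_∞ ‖W'''‖_∞ + ‖W''‖_∞ (|s| + ‖W''‖_∞)`. Since `X¹ − X²` is
merely bounded by `C`, Gronwall is run not on `|Y¹ − Y²|` itself but on its continuous majorant
`ψ = C + |∫₀^· (a(Y¹)S¹ − a(Y²)S²)|`. The mean value theorem makes `a` and `b` Lipschitz, so
`|S¹ − S²| ≤ ‖W'''‖_∞ ∫₀^· ψ`; with `|S¹| ≤ |s| + ‖W''‖_∞` and the splitting
`a(Y¹)S¹ − a(Y²)S² = (a(Y¹) − a(Y²))S¹ + a(Y²)(S¹ − S²)` this gives `ψ(u) ≤ C + K ∫₀ᵘ ψ`.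
Gronwall yields `ψ(t) ≤ C e^{Kt}`, and `e^K ≤ 1 + K e^K`. Periodicity makes the suprema finite.
-/

open MeasureTheory Set Real

theorem abs_integral_sub_integral_le {f₁ f₂ g : ℝ → ℝ} {a b : ℝ} (hab : a ≤ b)
    (hf₁ : IntervalIntegrable f₁ volume a b) (hf₂ : IntervalIntegrable f₂ volume a b)
    (hg : IntervalIntegrable g volume a b) (h : ∀ r ∈ Icc a b, |f₁ r - f₂ r| ≤ g r) :
    |(∫ r in a..b, f₁ r) - ∫ r in a..b, f₂ r| ≤ ∫ r in a..b, g r := by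
  rw [← intervalIntegral.integral_sub hf₁ hf₂]
  exact intervalIntegral.norm_integral_le_of_norm_le (f := fun r => f₁ r - f₂ r) hab
    (ae_of_all _ fun r hr => h r (Ioc_subset_Icc_self hr)) hg

theorem exp_mul_le_one_add_mul_exp {K t : ℝ} (hK : 0 ≤ K) (ht : t ≤ 1) :
    exp (K * t) ≤ 1 + K * exp K := by
  have h₁ : exp (K * t) ≤ exp K := exp_le_exp.2 (by nlinarith)
  have h₂ : exp K * (1 - K) ≤ 1 := by
    simpa [← exp_add] using mul_le_mul_of_nonneg_left (by linarith [add_one_le_exp (-K)] :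
      1 - K ≤ exp (-K)) (exp_pos K).le
  nlinarith

theorem Function.Periodic.abs_le_iSup_abs {f : ℝ → ℝ} {c : ℝ} (hp : Function.Periodic f c)
    (hc : c ≠ 0) (hf : Continuous f) (x : ℝ) : |f x| ≤ ⨆ z, |f z| := by
  obtain ⟨M, hM⟩ := isBounded_iff_forall_norm_le.1 (hp.isBounded_of_continuous hc hf)
  exact le_ciSup ⟨M, by rintro _ ⟨z, rfl⟩; exact hM _ ⟨z, rfl⟩⟩ x

theorem Function.Periodic.deriv {f : ℝ → ℝ} {c : ℝ} (hp : Function.Periodic f c) :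
    Function.Periodic (deriv f) c := fun x => by
  rw [← deriv_comp_add_const, funext hp]

theorem abs_sub_le_mul_abs_sub_of_abs_deriv_le {f : ℝ → ℝ} {M : ℝ} (hf : Differentiable ℝ f)
    (h : ∀ x, |deriv f x| ≤ M) (x y : ℝ) : |f x - f y| ≤ M * |x - y| :=
  convex_univ.norm_image_sub_le_of_norm_deriv_le (fun z _ => hf z) (fun z _ => h z)
    (mem_univ y) (mem_univ x)

theorem le_mul_exp_of_le_add_mul_integral {f : ℝ → ℝ} {a b C K : ℝ} (hK : 0 ≤ K)
    (hf : ContinuousOn f (Icc a b)) (h : ∀ t ∈ Icc a b, f t ≤ C + K * ∫ r in a..t, f r) :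
    ∀ t ∈ Icc a b, f t ≤ C * exp (K * (t - a)) := by
  set G : ℝ → ℝ := fun t => C + K * ∫ r in a..t, f r
  have hG : ∀ t ∈ Icc a b, HasDerivWithinAt G (K * f t) (Icc a b) t := by
    intro t ht
    have := Fact.mk ht
    refine .const_add C (.const_mul K ?_)
    exact intervalIntegral.integral_hasDerivWithinAt_right
      ((hf.mono (uIcc_subset_Icc (left_mem_Icc.2 (ht.1.trans ht.2)) ht)).intervalIntegrable)
      (hf.stronglyMeasurableAtFilter_nhdsWithin measurableSet_Icc t) (hf t ht)
  have hG_le : ∀ t ∈ Icc a b, G t ≤ gronwallBound C K 0 (t - a) := by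
    refine le_gronwallBound_of_liminf_deriv_right_le (f' := fun t => K * f t)
      (fun t ht => (hG t ht).continuousWithinAt) (fun t ht r hr => ?_) (by simp [G])
      (fun t ht => by simpa using mul_le_mul_of_nonneg_left (h t (Ico_subset_Icc_self ht)) hK)
    refine ((hG t (Ico_subset_Icc_self ht)).mono_of_mem_nhdsWithin ?_).liminf_right_slope_le hr
    exact Filter.mem_of_superset (Icc_mem_nhdsGE ht.2) (Icc_subset_Icc_left ht.1)
  intro t ht
  simpa [gronwallBound_ε0] using (h t ht).trans (hG_le t ht)

theorem abs_mul_sub_mul_le (p₁ p₂ q₁ q₂ : ℝ) :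
    |p₁ * q₁ - p₂ * q₂| ≤ |p₁ - p₂| * |q₁| + |p₂| * |q₁ - q₂| := by
  rw [← abs_mul, ← abs_mul]
  exact (abs_add_le _ _).trans_eq' (by ring_nf)

section Stability

variable {a b : ℝ → ℝ} {s : ℝ} {Y Y₁ Y₂ S S₁ S₂ : ℝ → ℝ}

theorem abs_le_of_eq_add_integral {B : ℝ} (hb : ∀ z, |b z| ≤ B)
    (hS : ∀ t ∈ Icc (0 : ℝ) 1, S t = s + ∫ r in (0 : ℝ)..t, b (Y r)) :
    ∀ t ∈ Icc (0 : ℝ) 1, |S t| ≤ |s| + B := by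
  intro t ht
  have hB : 0 ≤ B := (abs_nonneg _).trans (hb 0)
  have hI : |∫ r in (0 : ℝ)..t, b (Y r)| ≤ B * |t - 0| :=
    intervalIntegral.norm_integral_le_of_norm_le_const (f := fun r => b (Y r)) fun r _ => hb (Y r)
  rw [sub_zero, abs_of_nonneg ht.1] at hI
  rw [hS t ht]
  nlinarith [abs_add_le s (∫ r in (0 : ℝ)..t, b (Y r)), ht.2]

theorem abs_sub_le_mul_integral_of_eq_add_integral {L : ℝ} {ψ : ℝ → ℝ}
    (hb : ∀ z w, |b z - b w| ≤ L * |z - w|)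
    (hint₁ : IntervalIntegrable (fun r => b (Y₁ r)) volume 0 1)
    (hint₂ : IntervalIntegrable (fun r => b (Y₂ r)) volume 0 1)
    (hS₁ : ∀ t ∈ Icc (0 : ℝ) 1, S₁ t = s + ∫ r in (0 : ℝ)..t, b (Y₁ r))
    (hS₂ : ∀ t ∈ Icc (0 : ℝ) 1, S₂ t = s + ∫ r in (0 : ℝ)..t, b (Y₂ r))
    (hψ : IntervalIntegrable ψ volume 0 1) (hYψ : ∀ r ∈ Icc (0 : ℝ) 1, |Y₁ r - Y₂ r| ≤ ψ r) :
    ∀ t ∈ Icc (0 : ℝ) 1, |S₁ t - S₂ t| ≤ L * ∫ r in (0 : ℝ)..t, ψ r := by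
  intro t ht
  have hL : 0 ≤ L := by simpa using (abs_nonneg _).trans (hb 1 0)
  have hsub : uIcc 0 t ⊆ uIcc (0 : ℝ) 1 := uIcc_subset_uIcc_left (Icc_subset_uIcc ht)
  rw [hS₁ t ht, hS₂ t ht, add_sub_add_left_eq_sub, ← intervalIntegral.integral_const_mul]
  refine abs_integral_sub_integral_le ht.1 (hint₁.mono_set hsub) (hint₂.mono_set hsub)
    ((hψ.mono_set hsub).const_mul L) fun r hr => ?_
  exact (hb _ _).trans (mul_le_mul_of_nonneg_left (hYψ r ⟨hr.1, hr.2.trans ht.2⟩) hL)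

theorem abs_integral_mul_sub_integral_mul_le {M₁ La Lb σ : ℝ} {ψ : ℝ → ℝ}
    (ha : ∀ z, |a z| ≤ M₁) (ha_lip : ∀ z w, |a z - a w| ≤ La * |z - w|) (hLb : 0 ≤ Lb)
    (hint₁ : IntervalIntegrable (fun r => a (Y₁ r) * S₁ r) volume 0 1)
    (hint₂ : IntervalIntegrable (fun r => a (Y₂ r) * S₂ r) volume 0 1)
    (hψ : ContinuousOn ψ (Icc 0 1)) (hψ_nonneg : ∀ r ∈ Icc (0 : ℝ) 1, 0 ≤ ψ r)
    (hYψ : ∀ r ∈ Icc (0 : ℝ) 1, |Y₁ r - Y₂ r| ≤ ψ r) (hS₁ : ∀ r ∈ Icc (0 : ℝ) 1, |S₁ r| ≤ σ)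
    (hS : ∀ r ∈ Icc (0 : ℝ) 1, |S₁ r - S₂ r| ≤ Lb * ∫ v in (0 : ℝ)..r, ψ v) :
    ∀ u ∈ Icc (0 : ℝ) 1,
      |(∫ r in (0 : ℝ)..u, a (Y₁ r) * S₁ r) - ∫ r in (0 : ℝ)..u, a (Y₂ r) * S₂ r| ≤
        (M₁ * Lb + La * σ) * ∫ r in (0 : ℝ)..u, ψ r := by
  intro u hu
  have hM₁ : 0 ≤ M₁ := (abs_nonneg _).trans (ha 0)
  have hLa : 0 ≤ La := by simpa using (abs_nonneg _).trans (ha_lip 1 0)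
  have hψ_int : IntervalIntegrable ψ volume 0 u :=
    (hψ.mono (Icc_subset_Icc_right hu.2)).intervalIntegrable_of_Icc hu.1
  set A := ∫ r in (0 : ℝ)..u, ψ r
  have hA : 0 ≤ A :=
    intervalIntegral.integral_nonneg hu.1 fun r hr => hψ_nonneg r ⟨hr.1, hr.2.trans hu.2⟩
  have hdrift : ∀ r ∈ Icc 0 u,
      |a (Y₁ r) * S₁ r - a (Y₂ r) * S₂ r| ≤ La * σ * ψ r + M₁ * Lb * A := by
    intro r hr
    have hr₁ : r ∈ Icc (0 : ℝ) 1 := ⟨hr.1, hr.2.trans hu.2⟩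
    have hAr : ∫ v in (0 : ℝ)..r, ψ v ≤ A :=
      intervalIntegral.integral_mono_interval le_rfl hr.1 hr.2
        (ae_restrict_of_forall_mem measurableSet_Ioc fun v hv =>
          hψ_nonneg v ⟨hv.1.le, hv.2.trans hu.2⟩) hψ_int
    calc |a (Y₁ r) * S₁ r - a (Y₂ r) * S₂ r|
        ≤ |a (Y₁ r) - a (Y₂ r)| * |S₁ r| + |a (Y₂ r)| * |S₁ r - S₂ r| := abs_mul_sub_mul_le ..
      _ ≤ (La * ψ r) * σ + M₁ * (Lb * A) := by
        refine add_le_add (mul_le_mul ?_ (hS₁ r hr₁) (abs_nonneg _)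
          (mul_nonneg hLa (hψ_nonneg r hr₁))) (mul_le_mul (ha _) ?_ (abs_nonneg _) hM₁)
        · exact (ha_lip _ _).trans (mul_le_mul_of_nonneg_left (hYψ r hr₁) hLa)
        · exact (hS r hr₁).trans (mul_le_mul_of_nonneg_left hAr hLb)
      _ = La * σ * ψ r + M₁ * Lb * A := by ring
  have hsub : uIcc 0 u ⊆ uIcc (0 : ℝ) 1 := uIcc_subset_uIcc_left (Icc_subset_uIcc hu)
  have hD := abs_integral_sub_integral_le hu.1 (hint₁.mono_set hsub) (hint₂.mono_set hsub)
    ((hψ_int.const_mul _).add intervalIntegrable_const) hdrift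
  rw [intervalIntegral.integral_add (hψ_int.const_mul _) intervalIntegrable_const,
    intervalIntegral.integral_const_mul, intervalIntegral.integral_const, smul_eq_mul,
    sub_zero] at hD
  have hu_A : u * (M₁ * Lb * A) ≤ M₁ * Lb * A := mul_le_of_le_one_left (by positivity) hu.2
  linarith

theorem abs_sub_le_mul_exp_of_eq_add_integral {y C M₁ La Bb Lb : ℝ} {X₁ X₂ : ℝ → ℝ}
    (ha : ∀ z, |a z| ≤ M₁) (ha_lip : ∀ z w, |a z - a w| ≤ La * |z - w|)
    (hb : ∀ z, |b z| ≤ Bb) (hb_lip : ∀ z w, |b z - b w| ≤ Lb * |z - w|)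
    (hint₁ : IntervalIntegrable (fun r => a (Y₁ r) * S₁ r) volume 0 1)
    (hint₂ : IntervalIntegrable (fun r => b (Y₁ r)) volume 0 1)
    (hint₃ : IntervalIntegrable (fun r => a (Y₂ r) * S₂ r) volume 0 1)
    (hint₄ : IntervalIntegrable (fun r => b (Y₂ r)) volume 0 1)
    (hY₁ : ∀ t ∈ Icc (0 : ℝ) 1, Y₁ t = y + X₁ t + ∫ r in (0 : ℝ)..t, a (Y₁ r) * S₁ r)
    (hS₁ : ∀ t ∈ Icc (0 : ℝ) 1, S₁ t = s + ∫ r in (0 : ℝ)..t, b (Y₁ r))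
    (hY₂ : ∀ t ∈ Icc (0 : ℝ) 1, Y₂ t = y + X₂ t + ∫ r in (0 : ℝ)..t, a (Y₂ r) * S₂ r)
    (hS₂ : ∀ t ∈ Icc (0 : ℝ) 1, S₂ t = s + ∫ r in (0 : ℝ)..t, b (Y₂ r))
    (hC : ∀ u ∈ Icc (0 : ℝ) 1, |X₁ u - X₂ u| ≤ C) :
    ∀ t ∈ Icc (0 : ℝ) 1, |Y₁ t - Y₂ t| ≤ C * exp ((M₁ * Lb + La * (|s| + Bb)) * t) := by
  have hC₀ : 0 ≤ C := (abs_nonneg _).trans (hC 0 (left_mem_Icc.2 zero_le_one))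
  have hLb : 0 ≤ Lb := by simpa using (abs_nonneg _).trans (hb_lip 1 0)
  set ψ : ℝ → ℝ := fun u =>
    C + |(∫ r in (0 : ℝ)..u, a (Y₁ r) * S₁ r) - ∫ r in (0 : ℝ)..u, a (Y₂ r) * S₂ r|
  have hψ_cont : ContinuousOn ψ (Icc 0 1) := by
    rw [← uIcc_of_le zero_le_one]
    exact continuousOn_const.add
      ((intervalIntegral.continuousOn_primitive_interval' hint₁ left_mem_uIcc).sub
        (intervalIntegral.continuousOn_primitive_interval' hint₃ left_mem_uIcc)).abs
  have hψ_nonneg : ∀ r ∈ Icc (0 : ℝ) 1, 0 ≤ ψ r := fun r _ => add_nonneg hC₀ (abs_nonneg _)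
  have hYψ : ∀ r ∈ Icc (0 : ℝ) 1, |Y₁ r - Y₂ r| ≤ ψ r := by
    intro r hr
    calc |Y₁ r - Y₂ r|
        = |(X₁ r - X₂ r) + ((∫ u in (0 : ℝ)..r, a (Y₁ u) * S₁ u) -
            ∫ u in (0 : ℝ)..r, a (Y₂ u) * S₂ u)| := by rw [hY₁ r hr, hY₂ r hr]; ring_nf
      _ ≤ ψ r := (abs_add_le _ _).trans (add_le_add_left (hC r hr) _)
  have hS := abs_sub_le_mul_integral_of_eq_add_integral hb_lip hint₂ hint₄ hS₁ hS₂
    (hψ_cont.intervalIntegrable_of_Icc zero_le_one) hYψ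
  have hψ_le : ∀ u ∈ Icc (0 : ℝ) 1,
      ψ u ≤ C + (M₁ * Lb + La * (|s| + Bb)) * ∫ r in (0 : ℝ)..u, ψ r :=
    fun u hu => add_le_add_right (abs_integral_mul_sub_integral_mul_le ha ha_lip hLb hint₁ hint₃
      hψ_cont hψ_nonneg hYψ (abs_le_of_eq_add_integral hb hS₁) hS u hu) C
  intro t ht
  have hK : 0 ≤ M₁ * Lb + La * (|s| + Bb) := by
    have hM₁ : 0 ≤ M₁ := (abs_nonneg _).trans (ha 0)
    have hLa : 0 ≤ La := by simpa using (abs_nonneg _).trans (ha_lip 1 0)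
    have hBb : 0 ≤ Bb := (abs_nonneg _).trans (hb 0)
    positivity
  simpa using (hYψ t ht).trans (le_mul_exp_of_le_add_mul_integral hK hψ_cont hψ_le t ht)

end Stability

theorem stmt17_general (W : ℝ → ℝ) (hWper : ∀ x, W (x + 2 * Real.pi) = W x) (hW : ContDiff ℝ 3 W)
    (y s : ℝ) (X₁ X₂ : ℝ → ℝ)
    (Y₁ S₁ Y₂ S₂ : ℝ → ℝ)
    (hint1 : IntervalIntegrable (fun r => deriv W (Y₁ r) * S₁ r) volume 0 1)
    (hint2 : IntervalIntegrable (fun r => deriv (deriv W) (Y₁ r)) volume 0 1)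
    (hint3 : IntervalIntegrable (fun r => deriv W (Y₂ r) * S₂ r) volume 0 1)
    (hint4 : IntervalIntegrable (fun r => deriv (deriv W) (Y₂ r)) volume 0 1)
    (hY₁ : ∀ t ∈ Set.Icc (0:ℝ) 1,
      Y₁ t = y + X₁ t + ∫ r in (0:ℝ)..t, deriv W (Y₁ r) * S₁ r)
    (hS₁ : ∀ t ∈ Set.Icc (0:ℝ) 1,
      S₁ t = s + ∫ r in (0:ℝ)..t, deriv (deriv W) (Y₁ r))
    (hY₂ : ∀ t ∈ Set.Icc (0:ℝ) 1,
      Y₂ t = y + X₂ t + ∫ r in (0:ℝ)..t, deriv W (Y₂ r) * S₂ r)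
    (hS₂ : ∀ t ∈ Set.Icc (0:ℝ) 1,
      S₂ t = s + ∫ r in (0:ℝ)..t, deriv (deriv W) (Y₂ r)) :
    ∀ C : ℝ, (∀ u ∈ Set.Icc (0:ℝ) 1, |X₁ u - X₂ u| ≤ C) →
      ∀ t ∈ Set.Icc (0:ℝ) 1,
        |Y₁ t - Y₂ t| ≤ C * (1 +
          (((⨆ z : ℝ, |deriv W z|) * (⨆ z : ℝ, |deriv (deriv (deriv W)) z|) +
              (⨆ z : ℝ, |deriv (deriv W) z|) ^ 2) +
            (⨆ z : ℝ, |deriv (deriv W) z|) * |s|) *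
          Real.exp (((⨆ z : ℝ, |deriv W z|) * (⨆ z : ℝ, |deriv (deriv (deriv W)) z|) +
              (⨆ z : ℝ, |deriv (deriv W) z|) ^ 2) +
            (⨆ z : ℝ, |deriv (deriv W) z|) * |s|)) := by
  intro C hC t ht
  set M₁ := ⨆ z : ℝ, |deriv W z|
  set M₂ := ⨆ z : ℝ, |deriv (deriv W) z|
  set M₃ := ⨆ z : ℝ, |deriv (deriv (deriv W)) z|
  have hW₁ : ContDiff ℝ 2 (deriv W) := hW.deriv'
  have hW₂ : ContDiff ℝ 1 (deriv (deriv W)) := hW₁.deriv'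
  have hp₁ : Function.Periodic (deriv W) (2 * π) := Function.Periodic.deriv hWper
  have hπ : 2 * π ≠ 0 := by positivity
  have hM₁ : ∀ z, |deriv W z| ≤ M₁ := hp₁.abs_le_iSup_abs hπ hW₁.continuous
  have hM₂ : ∀ z, |deriv (deriv W) z| ≤ M₂ := hp₁.deriv.abs_le_iSup_abs hπ hW₂.continuous
  have hM₃ : ∀ z, |deriv (deriv (deriv W)) z| ≤ M₃ :=
    hp₁.deriv.deriv.abs_le_iSup_abs hπ (hW₂.continuous_deriv le_rfl)
  have hstab := abs_sub_le_mul_exp_of_eq_add_integral hM₁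
    (abs_sub_le_mul_abs_sub_of_abs_deriv_le (hW₁.differentiable two_ne_zero) hM₂) hM₂
    (abs_sub_le_mul_abs_sub_of_abs_deriv_le (hW₂.differentiable one_ne_zero) hM₃)
    hint1 hint2 hint3 hint4 hY₁ hS₁ hY₂ hS₂ hC t ht
  have hC₀ : 0 ≤ C := (abs_nonneg _).trans (hC 0 (left_mem_Icc.2 zero_le_one))
  have hK : 0 ≤ M₁ * M₃ + M₂ * (|s| + M₂) := by
    have := (abs_nonneg _).trans (hM₁ 0)
    have := (abs_nonneg _).trans (hM₂ 0)
    have := (abs_nonneg _).trans (hM₃ 0)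
    positivity
  rw [show M₁ * M₃ + M₂ ^ 2 + M₂ * |s| = M₁ * M₃ + M₂ * (|s| + M₂) by ring]
  exact hstab.trans (mul_le_mul_of_nonneg_left (exp_mul_le_one_add_mul_exp hK ht.2) hC₀)

/-- Gronwall-type stability estimate on `[0,1]` for the pathwise
inert-drift system: with `c₁ = ‖W'‖_∞·‖W'''‖_∞ + ‖W''‖_∞²` and `c₂ = ‖W''‖_∞`,
`sup_{0≤r≤1} |Y¹_r − Y²_r| ≤ sup_{0≤r≤1} |X¹_r − X²_r| · (1 + (c₁+c₂|s|)·e^{c₁+c₂|s|})`.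
(The supremum bound on `|X¹ − X²|` is expressed through an arbitrary upper bound `C`.) -/
theorem stmt17 (W : ℝ → ℝ) (hWper : ∀ x, W (x + 2 * Real.pi) = W x) (hW : ContDiff ℝ 3 W)
    (y s : ℝ) (X₁ X₂ : ℝ → ℝ) (hX₁ : Measurable X₁) (hX₂ : Measurable X₂)
    (Y₁ S₁ Y₂ S₂ : ℝ → ℝ)
    (hint1 : IntervalIntegrable (fun r => deriv W (Y₁ r) * S₁ r) volume 0 1)
    (hint2 : IntervalIntegrable (fun r => deriv (deriv W) (Y₁ r)) volume 0 1)
    (hint3 : IntervalIntegrable (fun r => deriv W (Y₂ r) * S₂ r) volume 0 1)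
    (hint4 : IntervalIntegrable (fun r => deriv (deriv W) (Y₂ r)) volume 0 1)
    (hY₁ : ∀ t ∈ Set.Icc (0:ℝ) 1,
      Y₁ t = y + X₁ t + ∫ r in (0:ℝ)..t, deriv W (Y₁ r) * S₁ r)
    (hS₁ : ∀ t ∈ Set.Icc (0:ℝ) 1,
      S₁ t = s + ∫ r in (0:ℝ)..t, deriv (deriv W) (Y₁ r))
    (hY₂ : ∀ t ∈ Set.Icc (0:ℝ) 1,
      Y₂ t = y + X₂ t + ∫ r in (0:ℝ)..t, deriv W (Y₂ r) * S₂ r)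
    (hS₂ : ∀ t ∈ Set.Icc (0:ℝ) 1,
      S₂ t = s + ∫ r in (0:ℝ)..t, deriv (deriv W) (Y₂ r)) :
    ∀ C : ℝ, (∀ u ∈ Set.Icc (0:ℝ) 1, |X₁ u - X₂ u| ≤ C) →
      ∀ t ∈ Set.Icc (0:ℝ) 1,
        |Y₁ t - Y₂ t| ≤ C * (1 +
          (((⨆ z : ℝ, |deriv W z|) * (⨆ z : ℝ, |deriv (deriv (deriv W)) z|) +
              (⨆ z : ℝ, |deriv (deriv W) z|) ^ 2) +
            (⨆ z : ℝ, |deriv (deriv W) z|) * |s|) *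
          Real.exp (((⨆ z : ℝ, |deriv W z|) * (⨆ z : ℝ, |deriv (deriv (deriv W)) z|) +
              (⨆ z : ℝ, |deriv (deriv W) z|) ^ 2) +
            (⨆ z : ℝ, |deriv (deriv W) z|) * |s|)) :=
  stmt17_general W hWper hW y s X₁ X₂ Y₁ S₁ Y₂ S₂ hint1 hint2 hint3 hint4 hY₁ hS₁ hY₂ hS₂
end
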